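/- The Fan-Counter implication fails at the binary level: with the binary relations r_a = upward closure of {([1↦0], [])} and r_b = upward closure of {([], [1↦0])} (upward closure taken componentwise in both heaps), the pair ([1↦0], [1↦0]) belongs to D ∩ (r_a * r_b), where D = {(h_1,h_2) | 1 ∈ dom h_1 ∩ dom h_2 and h_1(1) = h_2(1)}, but ([1↦0],[1↦0]) belongs neither to D * r_a nor to D * r_b. In fact, both D * r_a and D * r_b are empty. -/
import Mathlib


/-- A heap: a finite partial function from positive integers to integers. -/
abbrev Heap : Type := Finmap (fun _ : ℕ+ => ℤ)

/-- Heap extension order: `hle f h` means `h` extends `f`. -/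
def hle (f h : Heap) : Prop := ∀ (x : ℕ+) (v : ℤ), f.lookup x = some v → h.lookup x = some v

/-- Upward-closed sets of heaps. -/
def UpClosed (p : Set Heap) : Prop := ∀ ⦃f h : Heap⦄, f ∈ p → hle f h → h ∈ p

/-- Separating conjunction of sets of heaps. -/
def sep (p q : Set Heap) : Set Heap :=
  { h | ∃ f g : Heap, f ∈ p ∧ g ∈ q ∧ f.Disjoint g ∧ h = f ∪ g }

/-- Upward closure of a set of heaps. -/
def up (p : Set Heap) : Set Heap := { h | ∃ f ∈ p, hle f h }

/-- The diagonal map `Δ_n`. -/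
def Delta (n : ℕ) (p : Set Heap) : Set (Fin n → Heap) :=
  { h | ∃ f ∈ p, ∀ i, hle f (h i) }

/-- Componentwise extension order on `n`-tuples of heaps. -/
def hleN {n : ℕ} (f g : Fin n → Heap) : Prop := ∀ i, hle (f i) (g i)

/-- Componentwise upward-closed `n`-ary heap relations. -/
def UpClosedN {n : ℕ} (r : Set (Fin n → Heap)) : Prop :=
  ∀ ⦃f g : Fin n → Heap⦄, f ∈ r → hleN f g → g ∈ r

/-- `n`-ary separating conjunction. -/
def sepN {n : ℕ} (r s : Set (Fin n → Heap)) : Set (Fin n → Heap) :=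
  { h | ∃ f g : Fin n → Heap, f ∈ r ∧ g ∈ s ∧ (∀ i, (f i).Disjoint (g i)) ∧
        h = fun i => f i ∪ g i }

/-- Componentwise upward-closed binary heap relations. -/
def UpClosed2 (r : Set (Heap × Heap)) : Prop :=
  ∀ ⦃f g : Heap × Heap⦄, f ∈ r → hle f.1 g.1 → hle f.2 g.2 → g ∈ r

/-- Binary separating conjunction. -/
def sep2 (r s : Set (Heap × Heap)) : Set (Heap × Heap) :=
  { h | ∃ f g : Heap × Heap, f ∈ r ∧ g ∈ s ∧ f.1.Disjoint g.1 ∧ f.2.Disjoint g.2 ∧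
        h = (f.1 ∪ g.1, f.2 ∪ g.2) }

/-- Componentwise upward closure of a binary heap relation. -/
def up2 (r : Set (Heap × Heap)) : Set (Heap × Heap) :=
  { h | ∃ f ∈ r, hle f.1 h.1 ∧ hle f.2 h.2 }

/-- The binary interpretation `Δ₂`. -/
def Delta2 (p : Set Heap) : Set (Heap × Heap) :=
  { h | ∃ f ∈ p, hle f h.1 ∧ hle f h.2 }

/-- Binary interpretation of `1 ↦ _`. -/
def D : Set (Heap × Heap) :=
  { h | (1 : ℕ+) ∈ h.1 ∧ (1 : ℕ+) ∈ h.2 ∧ h.1.lookup 1 = h.2.lookup 1 }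

theorem fan_counter_binary_failure :
    let one0 : Heap := Finmap.singleton 1 0
    let ra : Set (Heap × Heap) := up2 {(one0, (∅ : Heap))}
    let rb : Set (Heap × Heap) := up2 {((∅ : Heap), one0)}
    (one0, one0) ∈ D ∩ sep2 ra rb ∧ sep2 D ra = ∅ ∧ sep2 D rb = ∅ := by

  intro one0 ra rb
  have hmem : (1:ℕ+) ∈ one0 := by simp [one0, Finmap.mem_singleton]
  refine ⟨⟨⟨hmem, hmem, rfl⟩, ?_⟩, ?_, ?_⟩
  · refine ⟨(one0, ∅), (∅, one0), ⟨(one0, ∅), rfl, fun x v h => h, fun x v h => h⟩,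
      ⟨(∅, one0), rfl, fun x v h => h, fun x v h => h⟩, ?_, ?_, ?_⟩
    · exact fun x _ h => Finmap.notMem_empty h
    · exact fun x h => absurd h Finmap.notMem_empty
    · simp
  · ext ⟨h1, h2⟩
    simp only [sep2, Set.mem_setOf_eq, Set.mem_empty_iff_false, iff_false]
    rintro ⟨f, g, hf, ⟨p, hp, hg1, hg2⟩, hd1, hd2, heq⟩
    rw [Set.mem_singleton_iff] at hp
    subst hp
    have : (1:ℕ+) ∈ g.1 := by
      rw [Finmap.mem_iff]
      exact ⟨0, hg1 1 0 (by simp [one0])⟩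
    exact hd1 1 hf.1 this
  · ext ⟨h1, h2⟩
    simp only [sep2, Set.mem_setOf_eq, Set.mem_empty_iff_false, iff_false]
    rintro ⟨f, g, hf, ⟨p, hp, hg1, hg2⟩, hd1, hd2, heq⟩
    rw [Set.mem_singleton_iff] at hp
    subst hp
    have : (1:ℕ+) ∈ g.2 := by
      rw [Finmap.mem_iff]
      exact ⟨0, hg2 1 0 (by simp [one0])⟩
    exact hd2 1 hf.2.1 this
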